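/- Let P have length m, T have length n ≤ 3m/2, k ∈ [0,m], with the prefix and suffix of T of length m being k-mismatch occurrences of P. If d ≥ 2k is a positive integer and Q a primitive string with |Q| ≤ m/(8d) and δ_H(P,Q*) = d (exactly), then |Occ^H_k(P,T)| ≤ 6d. -/

import Mathlib

open List

variable {α : Type*}

/-- The fragment S[i..j) of a string (list) S. -/
def frag (S : List α) (i j : ℕ) : List α := (S.drop i).take (j - i)

/-- Q^∞[a..b): the fragment of the infinite repetition of Q from a (incl.) to b (excl.). -/
def repPrefix [Inhabited α] (Q : List α) (a b : ℕ) : List α :=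
  (List.range' a (b - a)).map (fun i => Q.getD (i % Q.length) default)

/-- Hamming distance of two strings of the same length (counted over positions of S). -/
def hamming [DecidableEq α] [Inhabited α] (S T : List α) : ℕ :=
  ((Finset.range S.length).filter
    (fun i => S.getD i default ≠ T.getD i default)).card

/-- δ_H(S, Q*): Hamming distance of S to the length-|S| prefix of Q^∞. -/
def hammingStar [DecidableEq α] [Inhabited α] (S Q : List α) : ℕ :=
  hamming S (repPrefix Q 0 S.length)

/-- Unit-cost Levenshtein distance (replaces the removed Mathlib `levenshtein Levenshtein.defaultCost`). -/
def levenshteinUnit [DecidableEq α] : List α → List α → ℕ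
  | [], ys => ys.length
  | x :: xs, [] => 1 + levenshteinUnit xs []
  | x :: xs, y :: ys =>
      min (1 + levenshteinUnit xs (y :: ys))
        (min (1 + levenshteinUnit (x :: xs) ys)
          ((if x = y then 0 else 1) + levenshteinUnit xs ys))
termination_by xs ys => xs.length + ys.length

/-- Edit (Levenshtein) distance. -/
def editDist [DecidableEq α] (S T : List α) : ℕ :=
  levenshteinUnit S T

/-- A string is primitive if it is nonempty and not a proper power of a string. -/
def Primitive (Q : List α) : Prop :=
  Q ≠ [] ∧ ∀ (U : List α) (t : ℕ), 2 ≤ t → Q ≠ (List.replicate t U).flatten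

/-- p is a period of S. -/
def IsPeriod [Inhabited α] (p : ℕ) (S : List α) : Prop :=
  0 < p ∧ ∀ i, i + p < S.length → S.getD i default = S.getD (i + p) default

/-- per(S): the smallest period of S. -/
noncomputable def per [Inhabited α] (S : List α) : ℕ := sInf {p | IsPeriod p S}

/-- Occ^H_k(P,T): starting positions of k-mismatch occurrences of P in T. -/
def occH [DecidableEq α] [Inhabited α] (k : ℕ) (P T : List α) : Finset ℕ :=
  (Finset.range (T.length - P.length + 1)).filter
    (fun i => hamming P (frag T i (i + P.length)) ≤ k)

/-- Exact occurrences of B in T. -/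
def occExact [DecidableEq α] (B T : List α) : Finset ℕ :=
  (Finset.range (T.length + 1)).filter (fun i => frag T i (i + B.length) = B)

/-- Occ^E_k(P,T): starting positions of k-error (edit distance) occurrences of P in T. -/
def occE [DecidableEq α] (k : ℕ) (P T : List α) : Set ℕ :=
  {i | ∃ j, i ≤ j ∧ j ≤ T.length ∧ editDist P (frag T i j) ≤ k}

/-- δ_E^cyc(S,Q): minimum edit distance of S to any substring of Q^∞. -/
noncomputable def edCyc [DecidableEq α] [Inhabited α] (S Q : List α) : ℕ :=
  sInf {d | ∃ i j, i ≤ j ∧ d = editDist S (repPrefix Q i j)}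

/-- δ_E(S,Q*): minimum edit distance of S to a prefix of Q^∞. -/
noncomputable def edStar [DecidableEq α] [Inhabited α] (S Q : List α) : ℕ :=
  sInf {d | ∃ j, d = editDist S (repPrefix Q 0 j)}

/-- Minimum edit distance of T to a substring of Q^∞ starting at position x. -/
noncomputable def edStarAt [DecidableEq α] [Inhabited α] (T Q : List α) (x : ℕ) : ℕ :=
  sInf {d | ∃ j, x ≤ j ∧ d = editDist T (repPrefix Q x j)}

/-- Minimum edit distance of T to a substring of Q^∞ ending at a position ≡ y (mod |Q|). -/
noncomputable def edEndAt [DecidableEq α] [Inhabited α] (T Q : List α) (y : ℕ) : ℕ :=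
  sInf {d | ∃ i j, i ≤ j ∧ j % Q.length = y % Q.length ∧ d = editDist T (repPrefix Q i j)}

/-- Minimum edit distance of L to a substring of Q^∞ ending at a multiple of |Q|. -/
noncomputable def edEndMul [DecidableEq α] [Inhabited α] (L Q : List α) : ℕ :=
  sInf {d | ∃ i j, i ≤ j * Q.length ∧ d = editDist L (repPrefix Q i (j * Q.length))}

/-- The fragment S[i..j) of S is locked with respect to Q. -/
def Locked [DecidableEq α] [Inhabited α] (S Q : List α) (i j : ℕ) : Prop :=
  (∃ a : ℕ, edCyc (frag S i j) Q = editDist (frag S i j) (repPrefix Q 0 (a * Q.length))) ∨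
  (j = S.length ∧ edCyc (frag S i j) Q = edStar (frag S i j) Q) ∨
  (i = 0 ∧ edCyc (frag S i j) Q = edEndMul (frag S i j) Q) ∨
  (i = 0 ∧ j = S.length)

/-- rot^j(Q): rotation moving the last j (mod |Q|) characters to the front. -/
def rotR (Q : List α) (j : ℕ) : List α := Q.rotate (Q.length - j % Q.length)

/-- |Mis(T,Q*) ∩ [a,b)|. -/
def misCount [DecidableEq α] [Inhabited α] (T Q : List α) (a b : ℕ) : ℕ :=
  ((Finset.Ico a b).filter (fun i => i < T.length ∧
     T.getD i default ≠ Q.getD (i % Q.length) default)).card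

/-- μ_j: the total weight of aligned mismatch pairs of P and T against Q^∞ at shift j·|Q|:
a pair (τ = j|Q|+π, π) with π ∈ Mis(P,Q*), τ ∈ Mis(T,Q*) has weight 2 − δ_H(P[π],T[τ]). -/
def mu [DecidableEq α] [Inhabited α] (P T Q : List α) (j : ℕ) : ℕ :=
  ∑ π ∈ Finset.range P.length,
    if P.getD π default ≠ Q.getD (π % Q.length) default ∧
       j * Q.length + π < T.length ∧
       T.getD (j * Q.length + π) default ≠ Q.getD ((j * Q.length + π) % Q.length) default
    then (if P.getD π default = T.getD (j * Q.length + π) default then 2 else 1)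
    else 0

/-!
Write d = δ_H(P, Q*) and e = k + d. A k-mismatch occurrence of P at i puts T[i..i+m) within
distance e of a prefix of Q^∞; so does the occurrence at 0 for T[0..m). On the overlap, of length
at least m/2 ≥ (2e + 1)|Q|, the two alignments therefore make Q^∞ agree with its shift by i at all
but 2e positions. If Q differed from its rotation by i, it would do so once in every block of |Q|
consecutive positions, hence at least 2e + 1 times; so primitivity forces |Q| ∣ i.

In particular the suffix occurrence is aligned, and T has at most 2e mismatches against Q^∞.
At an aligned occurrence i, at least d - k of the d mismatches π of P against Q^∞ are copied by
T, making i + π a mismatch of T. Double counting the pairs (i, π) gives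
|Occ| (d - k) ≤ 2d (k + d), hence |Occ| ≤ 6d because 2k ≤ d.
-/

open scoped Finset

namespace Finset

theorem card_filter_ne_le_left {ι β : Type*} [DecidableEq β] (s : Finset ι) (f g h : ι → β) :
    #{x ∈ s | f x ≠ h x} ≤ #{x ∈ s | g x ≠ f x} + #{x ∈ s | g x ≠ h x} := by
  classical
  refine (card_le_card fun x hx => ?_).trans (card_union_le _ _)
  simp only [mem_union, mem_filter] at hx ⊢
  by_contra! hc
  exact hx.2 ((hc.1 hx.1).symm.trans (hc.2 hx.1))

theorem card_filter_range_add_le (p : ℕ → Prop) [DecidablePred p] {a b c : ℕ} (hca : c ≤ a) :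
    #{x ∈ range (c + b) | p x} ≤ #{x ∈ range a | p x} + #{y ∈ range b | p (c + y)} := by
  rw [range_add, filter_union, filter_map]
  refine (card_union_le _ _).trans (add_le_add ?_ (card_map _).le)
  exact card_le_card (filter_subset_filter _ (range_subset_range.2 hca))

theorem card_mul_le_card_mul_card_of_le_card_add_mem (O M X : Finset ℕ) (c : ℕ)
    (h : ∀ i ∈ O, c ≤ #{π ∈ M | i + π ∈ X}) : #O * c ≤ #M * #X := by
  refine card_mul_le_card_mul (fun i π => i + π ∈ X) h fun π _ => ?_
  exact card_le_card_of_injOn (· + π) (fun i hi => (mem_filter.1 hi).2)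
    fun i _ j _ hij => Nat.add_right_cancel hij

theorem le_card_filter_range_natCast {q : ℕ} [NeZero q] (p : ZMod q → Prop) [DecidablePred p]
    {u : ZMod q} (hu : p u) (N : ℕ) : N ≤ #{x ∈ range (N * q) | p (x : ℕ)} := by
  have hmaps : ∀ j ∈ range N, u.val + j * q ∈ {x ∈ range (N * q) | p (x : ℕ)} := by
    intro j hj
    have hlt : u.val + j * q < N * q := by
      have := u.val_lt
      nlinarith [mem_range.1 hj]
    simpa [hlt, ZMod.natCast_zmod_val] using hu
  simpa using card_le_card_of_injOn (fun j => u.val + j * q) hmaps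
    fun i _ j _ hij => Nat.eq_of_mul_eq_mul_right (NeZero.pos q) (Nat.add_left_cancel hij)

end Finset

theorem List.flatten_replicate_take_of_getElem_mod {l : List α} {g : ℕ}
    (hg : g ∣ l.length)
    (h : ∀ i (hi : i < l.length), l[i] = l[i % g]'((Nat.mod_le i g).trans_lt hi)) :
    (List.replicate (l.length / g) (l.take g)).flatten = l := by
  rcases eq_or_ne l [] with rfl | hl
  · simp
  have hgl : (l.take g).length = g :=
    List.length_take_of_le (Nat.le_of_dvd (List.length_pos_iff.2 hl) hg)
  rw [← List.ofFn_getElem (xs := l.take g), ← List.ofFn_fin_repeat]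
  apply List.ext_getElem
  · simp [hgl, Nat.div_mul_cancel hg]
  · intro i h1 h2
    simp [Fin.repeat_apply, h i h2, hgl]

section Strings

variable [Inhabited α]

-- Indexing Q^∞ by `ZMod Q.length` turns shifts of Q^∞ into additions.
def cyclicLetter (Q : List α) (x : ZMod Q.length) : α := Q.getD x.val default

theorem cyclicLetter_natCast (Q : List α) (x : ℕ) :
    cyclicLetter Q x = Q.getD (x % Q.length) default := by
  rw [cyclicLetter, ZMod.val_natCast]

theorem Primitive.eq_zero_of_periodic {Q : List α} (hQ : Primitive Q) {s : ZMod Q.length}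
    (hs : Function.Periodic (cyclicLetter Q) s) : s = 0 := by
  have : NeZero Q.length := ⟨by simpa using hQ.1⟩
  -- By Bézout gcd(s, |Q|) is a period too; it properly divides |Q|, so Q is a proper power.
  have hper : Function.Periodic (cyclicLetter Q) (Nat.gcd s.val Q.length) := by
    have hbez := congrArg (Int.cast : ℤ → ZMod Q.length) (Nat.gcd_eq_gcd_ab s.val Q.length)
    push_cast [ZMod.natCast_self, ZMod.natCast_zmod_val] at hbez
    simpa [hbez, mul_comm] using hs.int_mul (Nat.gcdA s.val Q.length)
  by_contra hs0
  have hsval : 0 < s.val := Nat.pos_of_ne_zero ((ZMod.val_ne_zero s).2 hs0)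
  set g := Nat.gcd s.val Q.length
  have hgq : g < Q.length := (Nat.le_of_dvd hsval (Nat.gcd_dvd_left _ _)).trans_lt s.val_lt
  have hg0 : 0 < g := Nat.gcd_pos_of_pos_left _ hsval
  have hdvd : g ∣ Q.length := Nat.gcd_dvd_right _ _
  refine hQ.2 (Q.take g) (Q.length / g) ?_
    (List.flatten_replicate_take_of_getElem_mod hdvd fun i hi => ?_).symm
  · obtain ⟨t, ht⟩ := hdvd
    rw [ht, Nat.mul_div_cancel_left _ hg0]
    by_contra! ht2
    interval_cases t <;> omega
  · have := hper.nat_mul (i / g) (i % g : ℕ)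
    rw [← Nat.cast_mul, ← Nat.cast_add, Nat.mod_add_div'] at this
    have hig : i % g < Q.length := (Nat.mod_lt i hg0).trans hgq
    rwa [cyclicLetter_natCast, cyclicLetter_natCast, Nat.mod_eq_of_lt hi, Nat.mod_eq_of_lt hig,
      List.getD_eq_getElem _ _ hi, List.getD_eq_getElem _ _ hig] at this

theorem getD_frag_add (T : List α) {i L π : ℕ} (hπ : π < L) :
    (frag T i (i + L)).getD π default = T.getD (i + π) default := by
  simp [frag, List.getD_eq_getElem?_getD, List.getElem?_take_of_lt hπ]

theorem getD_repPrefix_zero (Q : List α) {L π : ℕ} (hπ : π < L) :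
    (repPrefix Q 0 L).getD π default = Q.getD (π % Q.length) default := by
  simp [repPrefix, List.getD_eq_getElem?_getD, hπ]

variable [DecidableEq α]

def mismatches (S Q : List α) : Finset ℕ :=
  {x ∈ Finset.range S.length | S.getD x default ≠ cyclicLetter Q x}

theorem card_mismatches (S Q : List α) : #(mismatches S Q) = hammingStar S Q := by
  unfold mismatches hammingStar hamming
  congr 1
  refine Finset.filter_congr fun x hx => ?_
  rw [getD_repPrefix_zero Q (Finset.mem_range.1 hx), cyclicLetter_natCast]

theorem hamming_frag_eq_card (P T : List α) (i : ℕ) :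
    hamming P (frag T i (i + P.length)) =
      #{π ∈ Finset.range P.length | P.getD π default ≠ T.getD (i + π) default} := by
  unfold hamming
  congr 1
  refine Finset.filter_congr fun π hπ => ?_
  rw [getD_frag_add T (Finset.mem_range.1 hπ)]

theorem mem_occH {k : ℕ} {P T : List α} (h : P.length ≤ T.length) {i : ℕ} :
    i ∈ occH k P T ↔
      i + P.length ≤ T.length ∧ hamming P (frag T i (i + P.length)) ≤ k := by
  rw [occH, Finset.mem_filter, Finset.mem_range]
  omega

theorem Primitive.natCast_eq_zero_of_card_filter_ne_le {Q : List α} (hQ : Primitive Q)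
    (f : ℕ → α) {s L e : ℕ} (hL : (2 * e + 1) * Q.length ≤ L)
    (hf : #{x ∈ Finset.range L | f x ≠ cyclicLetter Q x} ≤ e)
    (hfs : #{x ∈ Finset.range L | f x ≠ cyclicLetter Q (x + s : ℕ)} ≤ e) :
    (s : ZMod Q.length) = 0 := by
  have : NeZero Q.length := ⟨by simpa using hQ.1⟩
  by_contra hs0
  obtain ⟨u, hu⟩ : ∃ u, cyclicLetter Q (u + s) ≠ cyclicLetter Q u := by
    by_contra! h
    exact hs0 (hQ.eq_zero_of_periodic h)
  have hmany := Finset.le_card_filter_range_natCast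
    (fun v : ZMod Q.length => cyclicLetter Q (v + s) ≠ cyclicLetter Q v) hu (2 * e + 1)
  have hfew := Finset.card_filter_ne_le_left (Finset.range L)
    (fun x => cyclicLetter Q (x + s : ℕ)) f (fun x => cyclicLetter Q x)
  have hsub := Finset.card_le_card (Finset.filter_subset_filter
    (fun x : ℕ => cyclicLetter Q (x + s : ℕ) ≠ cyclicLetter Q x)
    (Finset.range_subset_range.2 hL))
  push_cast at hfs hfew hsub
  omega

theorem card_filter_getD_ne_cyclicLetter_le (P T Q : List α) (i : ℕ) :
    #{π ∈ Finset.range P.length | T.getD (i + π) default ≠ cyclicLetter Q π} ≤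
      hamming P (frag T i (i + P.length)) + hammingStar P Q := by
  rw [hamming_frag_eq_card, ← card_mismatches]
  exact Finset.card_filter_ne_le_left _ _ (P.getD · default) _

theorem natCast_eq_zero_of_hamming_frag_le {P T Q : List α} (hQ : Primitive Q) {i e : ℕ}
    (hpre : hamming P (frag T 0 P.length) + hammingStar P Q ≤ e)
    (hocc : hamming P (frag T i (i + P.length)) + hammingStar P Q ≤ e)
    (hL : (2 * e + 1) * Q.length + i ≤ P.length) : (i : ZMod Q.length) = 0 := by
  refine hQ.natCast_eq_zero_of_card_filter_ne_le (fun π => T.getD (i + π) default)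
    (L := P.length - i) (e := e) (by omega) ?_ ?_
  · refine le_trans (Finset.card_le_card (Finset.filter_subset_filter _ ?_))
      ((card_filter_getD_ne_cyclicLetter_le P T Q i).trans hocc)
    exact Finset.range_subset_range.2 (Nat.sub_le _ _)
  · have hshift := card_filter_getD_ne_cyclicLetter_le P T Q 0
    simp only [zero_add] at hshift
    refine le_trans (Finset.card_le_card_of_injOn (i + ·) (fun π hπ => ?_) ?_)
      (hshift.trans hpre)
    · simp only [Finset.coe_filter, Finset.mem_range, Set.mem_ofPred_eq] at hπ ⊢
      exact ⟨by omega, by simpa only [add_comm π i] using hπ.2⟩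
    · exact fun a _ b _ hab => Nat.add_left_cancel hab

theorem card_mismatches_le_of_natCast_eq_zero {P T Q : List α} (hPT : P.length ≤ T.length)
    (hTP : T.length ≤ 2 * P.length)
    (halign : ((T.length - P.length : ℕ) : ZMod Q.length) = 0) :
    #(mismatches T Q) ≤ (hamming P (frag T 0 P.length) + hammingStar P Q) +
      (hamming P (frag T (T.length - P.length) T.length) + hammingStar P Q) := by
  have hshift : ∀ π : ℕ,
      cyclicLetter Q (T.length - P.length + π : ℕ) = cyclicLetter Q π := by
    intro π
    rw [Nat.cast_add, halign, zero_add]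
  have hsplit := Finset.card_filter_range_add_le
    (fun x => T.getD x default ≠ cyclicLetter Q x) (c := T.length - P.length)
    (a := P.length) (b := P.length) (by omega)
  have hprefix := card_filter_getD_ne_cyclicLetter_le P T Q 0
  have hsuffix := card_filter_getD_ne_cyclicLetter_le P T Q (T.length - P.length)
  simp only [zero_add] at hprefix
  simp only [Nat.sub_add_cancel hPT, hshift] at hsplit hsuffix
  exact hsplit.trans (add_le_add hprefix hsuffix)

theorem hammingStar_sub_le_card_filter_add_mem {P T Q : List α} {i : ℕ}
    (hi : i + P.length ≤ T.length) (halign : (i : ZMod Q.length) = 0) :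
    hammingStar P Q - hamming P (frag T i (i + P.length)) ≤
      #{π ∈ mismatches P Q | i + π ∈ mismatches T Q} := by
  rw [← card_mismatches, hamming_frag_eq_card]
  have hsplit := Finset.card_filter_add_card_filter_not
    (s := mismatches P Q) (fun π => P.getD π default = T.getD (i + π) default)
  have hdiff : #{π ∈ mismatches P Q | ¬P.getD π default = T.getD (i + π) default} ≤
      #{π ∈ Finset.range P.length | P.getD π default ≠ T.getD (i + π) default} :=
    Finset.card_le_card (Finset.filter_subset_filter _ (Finset.filter_subset _ _))
  have hsame : #{π ∈ mismatches P Q | P.getD π default = T.getD (i + π) default} ≤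
      #{π ∈ mismatches P Q | i + π ∈ mismatches T Q} := by
    refine Finset.card_le_card fun π hπ => ?_
    simp only [mismatches, Finset.mem_filter, Finset.mem_range] at hπ ⊢
    refine ⟨hπ.1, by omega, ?_⟩
    rw [← hπ.2, Nat.cast_add, halign, zero_add]
    exact hπ.1.2
  omega

end Strings

theorem periodic_few_occurrences_general {α : Type*} [DecidableEq α] [Inhabited α]
    (P T Q : List α) (m n k d : ℕ)
    (hP : P.length = m) (hT : T.length = n)
    (hmn : m ≤ n) (hn : 2 * n ≤ 3 * m)
    (hpre : hamming P (frag T 0 m) ≤ k) (hsuf : hamming P (frag T (n - m) n) ≤ k)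
    (hd0 : 0 < d) (hd : 2 * k ≤ d)
    (hQ : Primitive Q) (hQlen : 8 * d * Q.length ≤ m)
    (hPQ : hammingStar P Q = d) :
    (occH k P T).card ≤ 6 * d := by
  subst hP hT
  have halign : ∀ i, i + P.length ≤ T.length → hamming P (frag T i (i + P.length)) ≤ k →
      (i : ZMod Q.length) = 0 := fun i hi hocc =>
    natCast_eq_zero_of_hamming_frag_le (P := P) (T := T) hQ (e := k + d) (by omega) (by omega)
      (by nlinarith)
  have hmisT : #(mismatches T Q) ≤ 2 * (k + d) :=
    (card_mismatches_le_of_natCast_eq_zero hmn (by omega)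
      (halign _ (by omega) (by rwa [Nat.sub_add_cancel hmn]))).trans (by omega)
  have hcount := Finset.card_mul_le_card_mul_card_of_le_card_add_mem (occH k P T)
    (mismatches P Q) (mismatches T Q) (d - k) fun i hi => by
      obtain ⟨hi, hocc⟩ := (mem_occH hmn).1 hi
      exact (hammingStar_sub_le_card_filter_add_mem hi (halign i hi hocc)).trans' (by omega)
  rw [card_mismatches, hPQ] at hcount
  have hsub : d ≤ 2 * (d - k) := by omega
  nlinarith [Nat.mul_le_mul_left #(occH k P T) hsub, Nat.mul_le_mul_left d hmisT]

/-- if δ_H(P,Q*) = d exactly, there are at most 6d k-mismatch occurrences. -/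
theorem periodic_few_occurrences {α : Type*} [DecidableEq α] [Inhabited α]
    (P T Q : List α) (m n k d : ℕ)
    (hP : P.length = m) (hT : T.length = n)
    (hmn : m ≤ n) (hn : 2 * n ≤ 3 * m) (hk : k ≤ m)
    (hpre : hamming P (frag T 0 m) ≤ k) (hsuf : hamming P (frag T (n - m) n) ≤ k)
    (hd0 : 0 < d) (hd : 2 * k ≤ d)
    (hQ : Primitive Q) (hQlen : 8 * d * Q.length ≤ m)
    (hPQ : hammingStar P Q = d) :
    (occH k P T).card ≤ 6 * d :=
  periodic_few_occurrences_general P T Q m n k d hP hT hmn hn hpre hsuf hd0 hd hQ hQlen hPQ
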